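/- Mutual information bound for generalization (Xu–Raginsky): let $S = (Z_1,\dots,Z_n)$ be i.i.d. from $\mathcal{D}$ and $W$ a random element (possibly dependent on $S$). Suppose $\ell(Z,w)$ is $\sigma$-subgaussian for $Z \sim \mathcal{D}$, for each $w \in \mathcal{W}$. Then $\big|\mathbb{E}[R_{\mathcal{D}}(W) - \hat{R}_S(W)]\big| \le \sqrt{\frac{2\sigma^2}{n} I(S;W)}$, where $R_{\mathcal{D}}(w) = \mathbb{E}_{Z\sim\mathcal{D}}\ell(Z,w)$ and $\hat{R}_S(w) = \frac{1}{n}\sum_{i=1}^n \ell(Z_i,w)$. -/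

import Mathlib

open MeasureTheory ProbabilityTheory Real Classical

/-- The Kullback–Leibler divergence `KL(Q‖P) = ∫ log(dQ/dP) dQ` when `Q ≪ P` (and the
log-likelihood ratio is integrable), and `+∞` otherwise. -/
noncomputable def klDiv {α : Type*} [MeasurableSpace α] (μ ν : Measure α) : EReal :=
  if μ ≪ ν ∧ Integrable (llr μ ν) μ then ((∫ x, llr μ ν x ∂μ : ℝ) : EReal) else ⊤

/-! For a fixed hypothesis `w`, the gap `R_D(w) - R̂_S(w)` is an average of `n` independent
centred `σ`-subgaussian variables, hence `σ²/n`-subgaussian under `D^n`, and by Tonelli it stays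
so under the product `P_S ⊗ P_W` of the marginals. The Donsker–Varadhan inequality then gives
`t · 𝔼[gap] ≤ I(S;W) + t² σ² / (2n)` for every real `t`; a quadratic in `t` that is nonnegative
everywhere has nonpositive discriminant, which is the bound. -/

open scoped NNReal

lemma klDiv_le_coe_iff {α : Type*} [MeasurableSpace α] {μ ν : Measure α} {r : ℝ} :
    klDiv μ ν ≤ r ↔ μ ≪ ν ∧ Integrable (llr μ ν) μ ∧ ∫ x, llr μ ν x ∂μ ≤ r := by
  unfold klDiv
  split_ifs with h <;> simp_all

lemma abs_le_sqrt_of_forall_mul_le {a c K : ℝ} (h : ∀ t : ℝ, t * a ≤ K + c * t ^ 2 / 2) :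
    |a| ≤ √(2 * c * K) := by
  have hdisc : discrim (c / 2) (-a) K ≤ 0 := discrim_le_zero fun t => by linarith [h t]
  rw [← sqrt_sq_eq_abs]
  exact sqrt_le_sqrt (by rw [discrim] at hdisc; linarith)

section

variable {α : Type*} [MeasurableSpace α] {μ ν : Measure α}

lemma integral_le_integral_llr_add_log_integral_exp [IsProbabilityMeasure μ] [SigmaFinite ν]
    [NeZero ν] (hμν : μ ≪ ν) (hllr : Integrable (llr μ ν) μ) {g : α → ℝ} (hg : Integrable g μ)
    (hexp : Integrable (fun x => exp (g x)) ν) :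
    ∫ x, g x ∂μ ≤ ∫ x, llr μ ν x ∂μ + log (∫ x, exp (g x) ∂ν) := by
  have := isProbabilityMeasure_tilted hexp
  -- Gibbs' inequality for `μ` against the tilted measure `ν.tilted g`
  have hgibbs := InformationTheory.integral_llr_add_sub_measure_univ_nonneg
    (hμν.trans (absolutelyContinuous_tilted hexp)) (integrable_llr_tilted_right hμν hg hllr hexp)
  rw [integral_llr_tilted_right hμν hg hexp hllr] at hgibbs
  simp only [probReal_univ] at hgibbs
  linarith

lemma abs_integral_le_sqrt_of_hasSubgaussianMGF [IsProbabilityMeasure μ] [IsProbabilityMeasure ν]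
    (hμν : μ ≪ ν) (hllr : Integrable (llr μ ν) μ) {f : α → ℝ} (hf : Integrable f μ) {c : ℝ≥0}
    (hfν : HasSubgaussianMGF f c ν) :
    |∫ x, f x ∂μ| ≤ √(2 * c * ∫ x, llr μ ν x ∂μ) := by
  refine abs_le_sqrt_of_forall_mul_le fun t => ?_
  have hdv := integral_le_integral_llr_add_log_integral_exp hμν hllr (hf.const_mul t)
    (hfν.integrable_exp_mul t)
  rw [integral_const_mul] at hdv
  have hcgf : log (∫ x, exp (t * f x) ∂ν) ≤ c * t ^ 2 / 2 := hfν.cgf_le t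
  linarith

end

namespace ProbabilityTheory.HasSubgaussianMGF

variable {α β : Type*} [MeasurableSpace α] [MeasurableSpace β] {c : ℝ≥0}

lemma prod_of_forall {ν : Measure α} [SFinite ν] {ρ : Measure β} [IsProbabilityMeasure ρ]
    {f : α × β → ℝ} (hf : Measurable f) (h : ∀ y, HasSubgaussianMGF (fun x => f (x, y)) c ν) :
    HasSubgaussianMGF f c (ν.prod ρ) := by
  have hlint : ∀ t : ℝ, ∫⁻ p, ENNReal.ofReal (exp (t * f p)) ∂(ν.prod ρ)
      ≤ ENNReal.ofReal (exp (c * t ^ 2 / 2)) := fun t =>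
    calc ∫⁻ p, ENNReal.ofReal (exp (t * f p)) ∂(ν.prod ρ)
        = ∫⁻ y, ∫⁻ x, ENNReal.ofReal (exp (t * f (x, y))) ∂ν ∂ρ :=
          lintegral_prod_symm _ (by fun_prop)
      _ ≤ ∫⁻ _, ENNReal.ofReal (exp (c * t ^ 2 / 2)) ∂ρ := lintegral_mono fun y => by
          rw [← ofReal_integral_eq_lintegral_ofReal ((h y).integrable_exp_mul t)
            (ae_of_all _ fun _ => (exp_pos _).le)]
          exact ENNReal.ofReal_le_ofReal ((h y).mgf_le t)
      _ = ENNReal.ofReal (exp (c * t ^ 2 / 2)) := by simp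
  have hint : ∀ t : ℝ, Integrable (fun p => exp (t * f p)) (ν.prod ρ) := fun t =>
    ⟨by fun_prop, (hasFiniteIntegral_iff_ofReal (ae_of_all _ fun _ => (exp_pos _).le)).2
      ((hlint t).trans_lt ENNReal.ofReal_lt_top)⟩
  refine ⟨hint, fun t => ?_⟩
  rw [mgf, ← ENNReal.ofReal_le_ofReal_iff (exp_pos _).le,
    ofReal_integral_eq_lintegral_ofReal (hint t) (ae_of_all _ fun _ => (exp_pos _).le)]
  exact hlint t

lemma pi_sum {ι : Type*} [Fintype ι] {D : Measure β} [IsProbabilityMeasure D] {X : β → ℝ}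
    (hX : HasSubgaussianMGF X c D) :
    HasSubgaussianMGF (fun s : ι → β => ∑ i, X (s i)) (Fintype.card ι * c)
      (Measure.pi fun _ => D) := by
  have hXi : ∀ i, HasSubgaussianMGF (fun s : ι → β => X (s i)) c (Measure.pi fun _ => D) :=
    fun i => .of_map (X := X) (measurable_pi_apply i).aemeasurable
      (by rwa [(measurePreserving_eval _ i).map_eq])
  simpa using sum_of_iIndepFun (iIndepFun_pi fun _ => hX.aemeasurable) (s := Finset.univ)
    fun i _ => hXi i

lemma integral_sub_empiricalMean {D : Measure β} [IsProbabilityMeasure D] {n : ℕ} (hn : n ≠ 0)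
    {X : β → ℝ} (hX : HasSubgaussianMGF (fun z => X z - ∫ z', X z' ∂D) c D) :
    HasSubgaussianMGF (fun s : Fin n → β => ∫ z, X z ∂D - (n : ℝ)⁻¹ * ∑ i, X (s i)) (c / n)
      (Measure.pi fun _ => D) := by
  convert (hX.pi_sum (ι := Fin n)).const_mul (-(n : ℝ)⁻¹) using 1
  · funext s
    simp only [Finset.sum_sub_distrib, Finset.sum_const, Finset.card_univ, Fintype.card_fin,
      nsmul_eq_mul]
    field_simp
    ring
  · ext
    -- `const_mul` states its constant as a raw subtype literal, which `push_cast` does not unfold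
    change (c : ℝ) / n = (-(n : ℝ)⁻¹) ^ 2 * ((Fintype.card (Fin n) : ℝ) * c)
    rw [Fintype.card_fin]
    field_simp

end ProbabilityTheory.HasSubgaussianMGF

theorem xu_raginsky_generalization_bound_general
    {Ω 𝒵 𝒲 : Type*} [MeasurableSpace Ω] [MeasurableSpace 𝒵] [MeasurableSpace 𝒲]
    (μ : Measure Ω) [IsProbabilityMeasure μ]
    (D : Measure 𝒵) [IsProbabilityMeasure D]
    (n : ℕ) (hn : 0 < n) (Z : Fin n → Ω → 𝒵) (hZ : ∀ i, Measurable (Z i))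
    (hiid : μ.map (fun ω i => Z i ω) = Measure.pi (fun _ : Fin n => D))
    (W : Ω → 𝒲) (hW : Measurable W)
    (ℓ : 𝒵 → 𝒲 → ℝ) (hℓ : Measurable (fun p : 𝒵 × 𝒲 => ℓ p.1 p.2))
    (σ : ℝ)
    (hSGint : ∀ (w : 𝒲) (lam : ℝ),
      Integrable (fun z => exp (lam * (ℓ z w - ∫ z', ℓ z' w ∂D))) D)
    (hSG : ∀ (w : 𝒲) (lam : ℝ),
      ∫ z, exp (lam * (ℓ z w - ∫ z', ℓ z' w ∂D)) ∂D ≤ exp (lam ^ 2 * σ ^ 2 / 2))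
    (hGenInt : Integrable
      (fun ω => (∫ z, ℓ z (W ω) ∂D) - (n : ℝ)⁻¹ * ∑ i, ℓ (Z i ω) (W ω)) μ)
    (MI : ℝ)
    (hMI : klDiv (μ.map (fun ω => ((fun i => Z i ω), W ω)))
        ((μ.map (fun ω i => Z i ω)).prod (μ.map W)) ≤ (MI : EReal)) :
    |∫ ω, ((∫ z, ℓ z (W ω) ∂D) - (n : ℝ)⁻¹ * ∑ i, ℓ (Z i ω) (W ω)) ∂μ|
      ≤ Real.sqrt (2 * σ ^ 2 / n * MI) := by
  have hSW : Measurable fun ω => ((fun i => Z i ω), W ω) := (measurable_pi_lambda _ hZ).prodMk hW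
  have := Measure.isProbabilityMeasure_map (μ := μ) hW.aemeasurable
  have := Measure.isProbabilityMeasure_map (μ := μ) hSW.aemeasurable
  rw [hiid] at hMI
  obtain ⟨hac, hllr, hKL⟩ := klDiv_le_coe_iff.1 hMI
  set gap : (Fin n → 𝒵) × 𝒲 → ℝ := fun p => ∫ z, ℓ z p.2 ∂D - (n : ℝ)⁻¹ * ∑ i, ℓ (p.1 i) p.2
  have hrisk : Measurable fun w => ∫ z, ℓ z w ∂D :=
    hℓ.stronglyMeasurable.integral_prod_left'.measurable
  have hgap : Measurable gap := (hrisk.comp measurable_snd).sub <| measurable_const.mul <|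
    Finset.measurable_sum _ fun i _ =>
      hℓ.comp (f := fun p : (Fin n → 𝒵) × 𝒲 => (p.1 i, p.2)) (by fun_prop)
  have hsub : HasSubgaussianMGF gap ((σ ^ 2).toNNReal / n)
      ((Measure.pi fun _ => D).prod (μ.map W)) :=
    .prod_of_forall hgap fun w => .integral_sub_empiricalMean hn.ne'
      ⟨hSGint w, fun t =>
        (hSG w t).trans_eq (by rw [Real.coe_toNNReal _ (sq_nonneg σ), mul_comm])⟩
  have hbound := abs_integral_le_sqrt_of_hasSubgaussianMGF hac hllr
    ((integrable_map_measure hgap.aestronglyMeasurable hSW.aemeasurable).2 hGenInt) hsub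
  rw [integral_map hSW.aemeasurable hgap.aestronglyMeasurable] at hbound
  refine hbound.trans (sqrt_le_sqrt ?_)
  rw [NNReal.coe_div, Real.coe_toNNReal _ (sq_nonneg σ), NNReal.coe_natCast, ← mul_div_assoc]
  gcongr

/-- Xu–Raginsky mutual information generalization bound: if `S = (Z₁,…,Z_n)` is i.i.d.
from `D`, `W` is a (possibly `S`-dependent) learned parameter, and `ℓ(Z, w)` is
`σ`-subgaussian for `Z ~ D` for every `w`, then
`|𝔼[R_D(W) - R̂_S(W)]| ≤ √((2σ²/n) · I(S;W))`, where `I(S;W)` is the mutual information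
(here: any real upper bound `MI` on the KL divergence of the joint law from the product
of the marginals). -/
theorem xu_raginsky_generalization_bound
    {Ω 𝒵 𝒲 : Type*} [MeasurableSpace Ω] [MeasurableSpace 𝒵] [MeasurableSpace 𝒲]
    (μ : Measure Ω) [IsProbabilityMeasure μ]
    (D : Measure 𝒵) [IsProbabilityMeasure D]
    (n : ℕ) (hn : 0 < n) (Z : Fin n → Ω → 𝒵) (hZ : ∀ i, Measurable (Z i))
    (hiid : μ.map (fun ω i => Z i ω) = Measure.pi (fun _ : Fin n => D))
    (W : Ω → 𝒲) (hW : Measurable W)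
    (ℓ : 𝒵 → 𝒲 → ℝ) (hℓ : Measurable (fun p : 𝒵 × 𝒲 => ℓ p.1 p.2))
    (σ : ℝ) (hσ : 0 ≤ σ)
    (hℓint : ∀ w, Integrable (fun z => ℓ z w) D)
    (hSGint : ∀ (w : 𝒲) (lam : ℝ),
      Integrable (fun z => exp (lam * (ℓ z w - ∫ z', ℓ z' w ∂D))) D)
    (hSG : ∀ (w : 𝒲) (lam : ℝ),
      ∫ z, exp (lam * (ℓ z w - ∫ z', ℓ z' w ∂D)) ∂D ≤ exp (lam ^ 2 * σ ^ 2 / 2))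
    (hGenInt : Integrable
      (fun ω => (∫ z, ℓ z (W ω) ∂D) - (n : ℝ)⁻¹ * ∑ i, ℓ (Z i ω) (W ω)) μ)
    (MI : ℝ)
    (hMI : klDiv (μ.map (fun ω => ((fun i => Z i ω), W ω)))
        ((μ.map (fun ω i => Z i ω)).prod (μ.map W)) ≤ (MI : EReal)) :
    |∫ ω, ((∫ z, ℓ z (W ω) ∂D) - (n : ℝ)⁻¹ * ∑ i, ℓ (Z i ω) (W ω)) ∂μ|
      ≤ Real.sqrt (2 * σ ^ 2 / n * MI) :=
  xu_raginsky_generalization_bound_general μ D n hn Z hZ hiid W hW ℓ hℓ σ hSGint hSG hGenInt MI hMI
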